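/- Let x, y, u, v, a be positive integers with |x·u − y·v| ≤ a. Then there exist integers x', y' ≥ 0 with x'·u = y'·v and |x − x'| + |y − y'| ≤ a·(u + v). -/
import Mathlib


mutual
def LeftFirstWins (SL SR : Finset ℕ) : ℕ → Prop
  | n => ∃ s ∈ SL, ∃ (_ : 0 < s) (_ : s ≤ n), ¬ RightFirstWins SL SR (n - s)
  termination_by n => n
  decreasing_by omega
def RightFirstWins (SL SR : Finset ℕ) : ℕ → Prop
  | n => ∃ s ∈ SR, ∃ (_ : 0 < s) (_ : s ≤ n), ¬ LeftFirstWins SL SR (n - s)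
  termination_by n => n
  decreasing_by omega
end

inductive Outcome | P | L | R | N
deriving DecidableEq

open Classical in
noncomputable def outcome (SL SR : Finset ℕ) (n : ℕ) : Outcome :=
  if LeftFirstWins SL SR n then
    if RightFirstWins SL SR n then .N else .L
  else
    if RightFirstWins SL SR n then .R else .P

theorem stmt_16 (x y u v a : ℕ) (hx : 0 < x) (hy : 0 < y) (hu : 0 < u)
    (hv : 0 < v) (ha : 0 < a)
    (h : ((x : ℤ) * u - (y : ℤ) * v).natAbs ≤ a) :
    ∃ x' y' : ℕ, x' * u = y' * v ∧
      ((x : ℤ) - x').natAbs + ((y : ℤ) - y').natAbs ≤ a * (u + v) := by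
  set k := x / v with hk
  set e := x % v with he
  refine ⟨k * v, k * u, by ring, ?_⟩
  have hxe : k * v + e = x := by rw [hk, he, Nat.mul_comm]; exact Nat.div_add_mod x v
  have hev : e < v := Nat.mod_lt x hv
  have h1 : ((x : ℤ) - (k * v : ℕ)).natAbs = e := by
    have : ((x : ℤ) - (k * v : ℕ)) = e := by push_cast; omega
    rw [this]; exact Int.natAbs_natCast e
  set t := ((y : ℤ) - (k * u : ℕ)).natAbs with ht
  have key : (v : ℤ) * ((y : ℤ) - (k * u : ℕ)) = (u : ℤ) * e - ((x : ℤ) * u - (y : ℤ) * v) := by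
    push_cast
    have : (k : ℤ) * v + e = x := by exact_mod_cast hxe
    nlinarith [this]
  have habs : v * t ≤ u * e + a := by
    have h2 : ((v : ℤ) * ((y : ℤ) - (k * u : ℕ))).natAbs ≤ u * e + a := by
      rw [key]
      calc ((u : ℤ) * e - ((x : ℤ) * u - (y : ℤ) * v)).natAbs
          ≤ ((u : ℤ) * e).natAbs + ((x : ℤ) * u - (y : ℤ) * v).natAbs := Int.natAbs_sub_le _ _
        _ ≤ u * e + a := by
            rw [Int.natAbs_mul]
            simp only [Int.natAbs_natCast]
            omega
    rwa [Int.natAbs_mul, Int.natAbs_natCast] at h2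
  rw [h1]
  -- now need e + t ≤ a * (u + v), given v*t ≤ u*e + a, e < v, 1 ≤ a,u,v
  have hZ : (v : ℤ) * (e + t) ≤ (v : ℤ) * (a * (u + v)) := by
    have habs' : (v : ℤ) * t ≤ (u : ℤ) * e + a := by exact_mod_cast habs
    have hev' : (e : ℤ) + 1 ≤ v := by exact_mod_cast hev
    have ha' : (1 : ℤ) ≤ a := by exact_mod_cast ha
    have hu' : (1 : ℤ) ≤ u := by exact_mod_cast hu
    have hv' : (1 : ℤ) ≤ v := by exact_mod_cast hv
    have he0 : (0 : ℤ) ≤ e := Int.ofNat_nonneg e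
    have ht0 : (0 : ℤ) ≤ t := Int.ofNat_nonneg t
    nlinarith [mul_nonneg (mul_nonneg (by linarith : (0:ℤ) ≤ (a:ℤ) - 1)
        (by linarith : (0:ℤ) ≤ (v:ℤ) - 1)) (by linarith : (0:ℤ) ≤ (u:ℤ) + v),
      mul_le_mul_of_nonneg_right hev' (by linarith : (0:ℤ) ≤ (u:ℤ) + v)]
  have : v * (e + t) ≤ v * (a * (u + v)) := by exact_mod_cast hZ
  exact Nat.le_of_mul_le_mul_left this hv
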